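/- arXiv:2407.05537 — 2 statements merged into one kernel-verified Lean document; each statement's English description precedes it below -/
import Mathlib

section
/- The win-ratio-based preference relation can fail to be transitive: there exist three probability distributions P, Q, R on ℝ² (representing outcome distributions under three regimes) such that WR(P,Q) > 1/2, WR(Q,R) > 1/2, but WR(P,R) < 1/2, where WR compares independent draws lexicographically with tie margins. -/
open MeasureTheory

/-- The "win set": pairs (y, ỹ) in ℝ² × ℝ² for which the first draw y beats
the second draw ỹ at the first outcome at which they differ by more than the
corresponding margin. -/
def winSet (ϑ₁ ϑ₂ : ℝ) : Set ((ℝ × ℝ) × (ℝ × ℝ)) :=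
  {z | (ϑ₁ < |z.1.1 - z.2.1| ∧ z.2.1 ≤ z.1.1) ∨
       (|z.1.1 - z.2.1| ≤ ϑ₁ ∧ ϑ₂ < |z.1.2 - z.2.2| ∧ z.2.2 ≤ z.1.2)}

/-- Win probability of P against Q: the probability, for independent draws
(Y₁,Y₂) ~ P and (Ỹ₁,Ỹ₂) ~ Q, that the first outcome at which the two draws
differ by more than its margin favors P. -/
noncomputable def winProb (P Q : PMF (ℝ × ℝ)) (ϑ₁ ϑ₂ : ℝ) : ENNReal :=
  (P.toMeasure.prod Q.toMeasure) (winSet ϑ₁ ϑ₂)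

lemma measurable_winSet (a b : ℝ) : MeasurableSet (winSet a b) := by
  unfold winSet
  apply MeasurableSet.union
  · exact (measurableSet_lt measurable_const ((measurable_fst.fst.sub measurable_snd.fst).abs)).inter
      (measurableSet_le measurable_snd.fst measurable_fst.fst)
  · exact (measurableSet_le ((measurable_fst.fst.sub measurable_snd.fst).abs) measurable_const).inter
      ((measurableSet_lt measurable_const ((measurable_fst.snd.sub measurable_snd.snd).abs)).inter
        (measurableSet_le measurable_snd.snd measurable_fst.snd))

lemma half_lt_one' : (1:ENNReal)/2 < 1 := by
  rw [ENNReal.div_lt_iff (by norm_num) (by norm_num)]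
  simp [ENNReal.one_lt_two]

/-- the win-ratio-based preference can fail to be transitive:
there exist margins ϑ₁, ϑ₂ > 0 and distributions P, Q, R on ℝ² with
WR(P,Q) > 1/2, WR(Q,R) > 1/2 but WR(P,R) < 1/2. -/
theorem win_ratio_not_transitive :
    ∃ (ϑ₁ ϑ₂ : ℝ) (P Q R : PMF (ℝ × ℝ)),
      0 < ϑ₁ ∧ 0 < ϑ₂ ∧
      1 / 2 < winProb P Q ϑ₁ ϑ₂ ∧
      1 / 2 < winProb Q R ϑ₁ ϑ₂ ∧
      winProb P R ϑ₁ ϑ₂ < 1 / 2 := by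
  refine ⟨1, 1, PMF.pure (0, 2), PMF.pure (1, 0), PMF.pure (-1, 4),
    one_pos, one_pos, ?_, ?_, ?_⟩ <;>
  simp only [winProb, PMF.toMeasure_pure, Measure.dirac_prod_dirac]
  · rw [Measure.dirac_apply_of_mem
      (show (((0:ℝ),(2:ℝ)), ((1:ℝ),(0:ℝ))) ∈ winSet 1 1 by unfold winSet; norm_num)]
    exact half_lt_one'
  · rw [Measure.dirac_apply_of_mem
      (show (((1:ℝ),(0:ℝ)), ((-1:ℝ),(4:ℝ))) ∈ winSet 1 1 by unfold winSet; norm_num)]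
    exact half_lt_one'
  · rw [Measure.dirac_apply' _ (measurable_winSet 1 1)]
    have h : (((0:ℝ),(2:ℝ)), ((-1:ℝ),(4:ℝ))) ∉ winSet 1 1 := by
      unfold winSet; norm_num
    rw [Set.indicator_of_notMem h]
    exact ENNReal.div_pos one_ne_zero (by norm_num)
end

section
/- Under the margin condition, consistent estimation of values implies consistent selection: if sup_{π∈Π}|V̂_n(π) − V(π)| → 0, d is Hölder (d(u,v) ≤ C|u−v|^ς), and the true regime values satisfy the gap condition that no π has |d(S, V(π)) − δ| ≤ η for some fixed η > 0 (with S = sup_π V(π)), then for all n large enough the estimated equivalence class ξ̂_n = {π : d(Ŝ_n, V̂_n(π)) ≤ δ} equals the true class ξ = {π : d(S, V(π)) ≤ δ}, where Ŝ_n = sup_π V̂_n(π). -/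
/-- under the margin condition, uniform consistency of the
estimated values implies consistent selection of the equivalence class:
for all n large enough, {π : d(Ŝ_n, V̂_n(π)) ≤ δ} = {π : d(S, V(π)) ≤ δ}. -/
theorem consistent_selection_of_equivalence_class
    {P : Type*} [Nonempty P]
    (d : ℝ → ℝ → ℝ)
    (hd_self : ∀ u, d u u = 0)
    (hd_symm : ∀ u v, d u v = d v u)
    (hd_tri : ∀ u v w, d u w ≤ d u v + d v w)
    (hd_nonneg : ∀ u v, 0 ≤ d u v)
    (C c ς : ℝ) (hC : 0 < C) (hc : 0 < c) (hς : 0 < ς)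
    (hHolderUpper : ∀ u v : ℝ, d u v ≤ C * |u - v| ^ ς)
    (hHolderLower : ∀ u v : ℝ, c * |u - v| ^ ς ≤ d u v)
    (V : P → ℝ) (Vhat : ℕ → P → ℝ)
    (hbdd : BddAbove (Set.range V)) (hbddn : ∀ n, BddAbove (Set.range (Vhat n)))
    (S : ℝ) (hS : S = ⨆ π : P, V π)
    (Shat : ℕ → ℝ) (hShat : ∀ n, Shat n = ⨆ π : P, Vhat n π)
    (δ : ℝ) (hδ : 0 < δ)
    (η : ℝ) (hη : 0 < η)
    (hmargin : ∀ π : P, η ≤ |d S (V π) - δ|)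
    (huniform : ∀ ε > (0 : ℝ), ∃ N : ℕ, ∀ n ≥ N, ∀ π : P,
      |Vhat n π - V π| < ε) :
    ∃ N : ℕ, ∀ n ≥ N,
      {π : P | d (Shat n) (Vhat n π) ≤ δ} = {π : P | d S (V π) ≤ δ} := by
  set ε : ℝ := (η / (4 * C)) ^ (1 / ς) with hεdef
  have hεpos : 0 < ε := Real.rpow_pos_of_pos (by positivity) _
  have hες : ε ^ ς = η / (4 * C) := by
    rw [hεdef, ← Real.rpow_mul (by positivity), one_div_mul_cancel hς.ne', Real.rpow_one]
  have key : ∀ a a' b b' : ℝ, |d a b - d a' b'| ≤ d a a' + d b b' := by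
    intro a a' b b'
    rw [abs_sub_le_iff]
    constructor
    · have h1 : d a b ≤ d a a' + d a' b := hd_tri a a' b
      have h2 : d a' b ≤ d a' b' + d b' b := hd_tri a' b' b
      have h3 : d b' b = d b b' := hd_symm b' b
      linarith
    · have h1 : d a' b' ≤ d a' a + d a b' := hd_tri a' a b'
      have h2 : d a b' ≤ d a b + d b b' := hd_tri a b b'
      have h3 : d a' a = d a a' := hd_symm a' a
      linarith
  obtain ⟨N, hN⟩ := huniform ε hεpos
  refine ⟨N, fun n hn => ?_⟩
  have hSle : |Shat n - S| ≤ ε := by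
    rw [abs_sub_le_iff]
    constructor
    · have : Shat n ≤ S + ε := by
        rw [hShat, hS]
        apply ciSup_le
        intro π
        have h1 := abs_lt.mp (hN n hn π)
        have h2 : V π ≤ ⨆ π, V π := le_ciSup hbdd π
        linarith [h1.1, h1.2]
      linarith
    · have : S ≤ Shat n + ε := by
        rw [hShat, hS]
        apply ciSup_le
        intro π
        have h1 := abs_lt.mp (hN n hn π)
        have h2 : Vhat n π ≤ ⨆ π, Vhat n π := le_ciSup (hbddn n) π
        linarith [h1.1, h1.2]
      linarith
  have hbound : ∀ π : P, |d (Shat n) (Vhat n π) - d S (V π)| ≤ η / 2 := by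
    intro π
    have h1 := key (Shat n) S (Vhat n π) (V π)
    have hA : d (Shat n) S ≤ η / 4 := by
      calc d (Shat n) S ≤ C * |Shat n - S| ^ ς := hHolderUpper _ _
        _ ≤ C * ε ^ ς := by
            apply mul_le_mul_of_nonneg_left _ hC.le
            exact Real.rpow_le_rpow (abs_nonneg _) hSle hς.le
        _ = η / 4 := by rw [hες]; field_simp
    have hB : d (Vhat n π) (V π) ≤ η / 4 := by
      calc d (Vhat n π) (V π) ≤ C * |Vhat n π - V π| ^ ς := hHolderUpper _ _
        _ ≤ C * ε ^ ς := by
            apply mul_le_mul_of_nonneg_left _ hC.le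
            exact Real.rpow_le_rpow (abs_nonneg _) (hN n hn π).le hς.le
        _ = η / 4 := by rw [hες]; field_simp
    linarith
  ext π
  simp only [Set.mem_setOf_eq]
  have hm := hmargin π
  obtain ⟨hb1, hb2⟩ := abs_le.mp (hbound π)
  rcases le_or_gt (d S (V π)) δ with hle | hlt
  · have hkey : d S (V π) ≤ δ - η := by
      rcases abs_cases (d S (V π) - δ) with ⟨h, h2⟩ | ⟨h, h2⟩ <;> rw [h] at hm <;> linarith
    constructor <;> intro _ <;> linarith
  · have hkey : δ + η ≤ d S (V π) := by
      rcases abs_cases (d S (V π) - δ) with ⟨h, h2⟩ | ⟨h, h2⟩ <;> rw [h] at hm <;> linarith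
    constructor <;> intro _ <;> linarith
end
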